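/- arXiv:1902.09187 — 6 statements merged into one kernel-verified Lean document; each statement's English description precedes it below -/
import Mathlib

section
/- Let M : (0,∞) → ℝ be nondecreasing, let 1 ≤ j < m be integers and A > 0 a constant such that k · exp( M(j·k^{1/2}) − M(m·k^{1/2}) ) ≤ A for all integers k ≥ 1. Then for all t ≥ 1 one has M(t) + log t ≤ M( (m/j)·(j+1)·t ) + log(j²·A). -/
/-- If `M : (0,∞) → ℝ` is nondecreasing, `1 ≤ j < m` are integers and `A > 0`
satisfies `k · exp (M (j·√k) − M (m·√k)) ≤ A` for all integers `k ≥ 1`, then for all `t ≥ 1`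
one has `M t + log t ≤ M ((m/j)·(j+1)·t) + log (j²·A)`. -/
theorem growth_from_uniform_bound (M : ℝ → ℝ)
    (hmono : ∀ s t : ℝ, 0 < s → s ≤ t → M s ≤ M t)
    (j m : ℕ) (hj : 1 ≤ j) (hjm : j < m) (A : ℝ) (hA : 0 < A)
    (hbound : ∀ k : ℕ, 1 ≤ k →
      (k : ℝ) * Real.exp (M ((j : ℝ) * Real.sqrt k) - M ((m : ℝ) * Real.sqrt k)) ≤ A) :
    ∀ t : ℝ, 1 ≤ t →
      M t + Real.log t
        ≤ M (((m : ℝ) / (j : ℝ)) * ((j : ℝ) + 1) * t) + Real.log ((j : ℝ) ^ 2 * A) := by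
  intro t ht
  set jr : ℝ := (j : ℝ) with hjr
  set mr : ℝ := (m : ℝ) with hmr
  have hjr1 : (1 : ℝ) ≤ jr := by rw [hjr]; exact_mod_cast hj
  have hjr0 : (0 : ℝ) < jr := by linarith
  have hmr0 : (0 : ℝ) < mr := by
    have : jr < mr := by rw [hjr, hmr]; exact_mod_cast hjm
    linarith
  have ht0 : (0 : ℝ) < t := by linarith
  set k : ℕ := ⌈(t / jr) ^ 2⌉₊ with hk
  have hk1 : 1 ≤ k := Nat.one_le_ceil_iff.mpr (by positivity)
  have hk0 : (0 : ℝ) < (k : ℝ) := by exact_mod_cast hk1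
  have hkge : (t / jr) ^ 2 ≤ (k : ℝ) := Nat.le_ceil _
  have hsq : t / jr ≤ Real.sqrt k := by
    have := Real.sqrt_le_sqrt hkge
    rwa [Real.sqrt_sq (by positivity)] at this
  have hsqrt0 : (0 : ℝ) < Real.sqrt k := lt_of_lt_of_le (by positivity) hsq
  have ht_le : t ≤ jr * Real.sqrt k := by
    rw [div_le_iff₀ hjr0] at hsq
    linarith [hsq]
  have hkle : (k : ℝ) ≤ (t / jr) ^ 2 + 1 := (Nat.ceil_lt_add_one (by positivity)).le
  have hsqle : Real.sqrt k ≤ t / jr + 1 := by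
    have h1 : Real.sqrt k ≤ Real.sqrt ((t / jr + 1) ^ 2) := by
      apply Real.sqrt_le_sqrt
      nlinarith [div_nonneg ht0.le hjr0.le]
    rwa [Real.sqrt_sq (by positivity)] at h1
  have hjt : jr * Real.sqrt k ≤ (jr + 1) * t := by
    have h2 : jr * Real.sqrt k ≤ t + jr := by
      have := mul_le_mul_of_nonneg_left hsqle hjr0.le
      rw [mul_add, mul_div_cancel₀ _ (ne_of_gt hjr0)] at this
      linarith
    nlinarith
  have hmt : mr * Real.sqrt k ≤ mr / jr * (jr + 1) * t := by
    calc mr * Real.sqrt k = mr / jr * (jr * Real.sqrt k) := by field_simp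
      _ ≤ mr / jr * ((jr + 1) * t) := mul_le_mul_of_nonneg_left hjt (by positivity)
      _ = mr / jr * (jr + 1) * t := by ring
  have hbk := hbound k hk1
  have hk_le : (k : ℝ) ≤ A * Real.exp (M (mr * Real.sqrt k) - M (jr * Real.sqrt k)) := by
    have h := mul_le_mul_of_nonneg_right hbk
      (Real.exp_nonneg (M (mr * Real.sqrt k) - M (jr * Real.sqrt k)))
    rw [mul_assoc, ← Real.exp_add] at h
    simpa using h
  have hlogk : Real.log k ≤ Real.log A + (M (mr * Real.sqrt k) - M (jr * Real.sqrt k)) := by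
    have h := Real.log_le_log hk0 hk_le
    rwa [Real.log_mul (ne_of_gt hA) (Real.exp_ne_zero _), Real.log_exp] at h
  have hlogt : Real.log t ≤ Real.log jr + Real.log k := by
    have hsk : Real.sqrt k ≤ (k : ℝ) := by
      have hk1' : (1 : ℝ) ≤ (k : ℝ) := by exact_mod_cast hk1
      have h4 : Real.sqrt k ≤ Real.sqrt ((k : ℝ) ^ 2) := Real.sqrt_le_sqrt (by nlinarith)
      rwa [Real.sqrt_sq hk0.le] at h4
    have : t ≤ jr * k := le_trans ht_le (by nlinarith)
    calc Real.log t ≤ Real.log (jr * k) := Real.log_le_log ht0 this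
      _ = Real.log jr + Real.log k := Real.log_mul (ne_of_gt hjr0) (ne_of_gt hk0)
  have hM1 : M t ≤ M (jr * Real.sqrt k) := hmono _ _ ht0 ht_le
  have hM2 : M (mr * Real.sqrt k) ≤ M (mr / jr * (jr + 1) * t) :=
    hmono _ _ (by positivity) hmt
  have hlogA : Real.log ((jr : ℝ) ^ 2 * A) = 2 * Real.log jr + Real.log A := by
    rw [Real.log_mul (by positivity) (ne_of_gt hA), Real.log_pow]
    push_cast; ring
  have hlogj0 : 0 ≤ Real.log jr := Real.log_nonneg hjr1
  linarith
end

section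
/- Let M : (0,∞) → [0,∞) be nondecreasing with M(t) = 0 for 0 < t ≤ 1, and such that t ↦ M(e^t) is convex on ℝ. Assume that for every integer j ≥ 1 there exists an integer m > j such that the series ∑_{k=1}^∞ exp( M(j·k^{1/2}) − M(m·k^{1/2}) ) converges. Then there exists H > 1 such that M(t) + log t ≤ M(Ht) + H for all t > 0. -/
/-- Let `M : (0,∞) → [0,∞)` be nondecreasing, vanishing on `(0,1]`, with
`t ↦ M (e^t)` convex on `ℝ`. If for every integer `j ≥ 1` there is an integer `m > j` such that
`∑_{k=1}^∞ exp (M (j·√k) − M (m·√k))` converges, then there exists `H > 1` with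
`M t + log t ≤ M (H·t) + H` for all `t > 0`. -/
theorem growth_from_summability (M : ℝ → ℝ)
    (hnonneg : ∀ t : ℝ, 0 < t → 0 ≤ M t)
    (hmono : ∀ s t : ℝ, 0 < s → s ≤ t → M s ≤ M t)
    (h01 : ∀ t : ℝ, 0 < t → t ≤ 1 → M t = 0)
    (hconv : ConvexOn ℝ Set.univ (fun u : ℝ => M (Real.exp u)))
    (hsum : ∀ j : ℕ, 1 ≤ j → ∃ m : ℕ, j < m ∧
      Summable (fun k : ℕ =>
        Real.exp (M ((j : ℝ) * Real.sqrt (k + 1)) - M ((m : ℝ) * Real.sqrt (k + 1))))) :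
    ∃ H : ℝ, 1 < H ∧ ∀ t : ℝ, 0 < t → M t + Real.log t ≤ M (H * t) + H := by
  obtain ⟨m, hm1, hsm⟩ := hsum 1 le_rfl
  have hm2 : (2:ℕ) ≤ m := hm1
  have hmR : (2:ℝ) ≤ (m:ℝ) := by exact_mod_cast hm2
  simp only [Nat.cast_one, one_mul] at hsm
  set f : ℝ → ℝ := fun u => M (Real.exp u) with hf
  set δ : ℝ := Real.log m with hδ
  have hδ0 : 0 < δ := Real.log_pos (by linarith)
  have fmono : ∀ u v : ℝ, u ≤ v → f u ≤ f v := fun u v h =>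
    hmono _ _ (Real.exp_pos u) (Real.exp_le_exp.mpr h)
  -- monotonicity of increments from convexity
  have gmono : ∀ u v : ℝ, u ≤ v → f (u + δ) - f u ≤ f (v + δ) - f v := by
    intro u v huv
    have hL : 0 < v - u + δ := by linarith
    have hLne : v - u + δ ≠ 0 := ne_of_gt hL
    have hs : 0 ≤ (v - u) / (v - u + δ) := div_nonneg (by linarith) hL.le
    have ht : 0 ≤ δ / (v - u + δ) := div_nonneg hδ0.le hL.le
    have hst : (v - u) / (v - u + δ) + δ / (v - u + δ) = 1 := by field_simp
    have h1 := hconv.2 (Set.mem_univ u) (Set.mem_univ (v + δ)) hs ht hst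
    have h2 := hconv.2 (Set.mem_univ u) (Set.mem_univ (v + δ)) ht hs (by linarith)
    have e1 : ((v - u) / (v - u + δ)) • u + (δ / (v - u + δ)) • (v + δ) = u + δ := by
      rw [smul_eq_mul, smul_eq_mul]
      field_simp
      ring
    have e2 : (δ / (v - u + δ)) • u + ((v - u) / (v - u + δ)) • (v + δ) = v := by
      rw [smul_eq_mul, smul_eq_mul]
      field_simp
      ring
    rw [e1] at h1
    rw [e2] at h2
    simp only [smul_eq_mul] at h1 h2
    have e3 : (v - u) / (v - u + δ) * f u + δ / (v - u + δ) * f u = f u := by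
      rw [← add_mul, hst, one_mul]
    have e4 : (v - u) / (v - u + δ) * f (v + δ) + δ / (v - u + δ) * f (v + δ) = f (v + δ) := by
      rw [← add_mul, hst, one_mul]
    linarith
  -- the summable sequence
  set a : ℕ → ℝ := fun k =>
    Real.exp (M (Real.sqrt ((k:ℝ) + 1)) - M ((m : ℝ) * Real.sqrt ((k:ℝ) + 1))) with ha_def
  set S : ℝ := ∑' k, a k with hS_def
  have hS0 : 0 < S := Summable.tsum_pos hsm (fun i => (Real.exp_pos _).le) 0 (Real.exp_pos _)
  -- rewrite a in terms of f
  have hsq : ∀ k : ℕ, Real.sqrt ((k:ℝ) + 1) = Real.exp (Real.log ((k:ℝ)+1) / 2) := by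
    intro k
    have hk1 : (0:ℝ) < (k:ℝ) + 1 := by positivity
    rw [Real.sqrt_eq_rpow, Real.rpow_def_of_pos hk1]
    ring_nf
  have hmsq : ∀ k : ℕ, (m:ℝ) * Real.sqrt ((k:ℝ) + 1)
      = Real.exp (Real.log ((k:ℝ)+1) / 2 + δ) := by
    intro k
    rw [hsq k, Real.exp_add, hδ, Real.exp_log (by linarith : (0:ℝ) < (m:ℝ))]
    ring
  have ha_eq : ∀ k : ℕ, a k
      = Real.exp (f (Real.log ((k:ℝ)+1) / 2) - f (Real.log ((k:ℝ)+1) / 2 + δ)) := by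
    intro k
    rw [ha_def]
    simp only
    rw [hmsq k, hsq k]
  -- a is nonincreasing, hence a k ≤ S/(k+1)
  have hdec : ∀ i k : ℕ, i ≤ k → a k ≤ a i := by
    intro i k hik
    rw [ha_eq i, ha_eq k]
    apply Real.exp_le_exp.mpr
    have hw : Real.log ((i:ℝ)+1) / 2 ≤ Real.log ((k:ℝ)+1) / 2 := by
      have : Real.log ((i:ℝ)+1) ≤ Real.log ((k:ℝ)+1) :=
        Real.log_le_log (by positivity) (by exact_mod_cast Nat.succ_le_succ hik)
      linarith
    have := gmono _ _ hw
    linarith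
  have hbound : ∀ k : ℕ, ((k:ℝ)+1) * a k ≤ S := by
    intro k
    have h1 : ∀ i ∈ Finset.range (k+1), a k ≤ a i := by
      intro i hi
      exact hdec i k (Nat.lt_succ_iff.mp (Finset.mem_range.mp hi))
    have h2 := Finset.card_nsmul_le_sum (Finset.range (k+1)) a (a k) h1
    have h3 : ∑ i ∈ Finset.range (k+1), a i ≤ S :=
      Summable.sum_le_tsum (Finset.range (k+1)) (fun i _ => (Real.exp_pos _).le) hsm
    simp only [Finset.card_range, nsmul_eq_mul] at h2
    have : ((k:ℝ)+1) * a k = ((k+1 : ℕ) : ℝ) * a k := by push_cast; ring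
    rw [this]
    linarith
  -- key estimate at discrete points
  have hkey : ∀ k : ℕ, Real.log ((k:ℝ)+1) - Real.log S
      ≤ f (Real.log ((k:ℝ)+1) / 2 + δ) - f (Real.log ((k:ℝ)+1) / 2) := by
    intro k
    have hk1 : (0:ℝ) < (k:ℝ) + 1 := by positivity
    have hak : a k ≤ S / ((k:ℝ)+1) := by
      rw [le_div_iff₀ hk1]
      have := hbound k
      linarith [hbound k]
    have hlog : f (Real.log ((k:ℝ)+1) / 2) - f (Real.log ((k:ℝ)+1) / 2 + δ)
        ≤ Real.log S - Real.log ((k:ℝ)+1) := by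
      have h1 : Real.log (a k) ≤ Real.log (S / ((k:ℝ)+1)) := by
        apply Real.log_le_log _ hak
        rw [ha_eq k]
        exact Real.exp_pos _
      rw [ha_eq k, Real.log_exp, Real.log_div (ne_of_gt hS0) (ne_of_gt hk1)] at h1
      exact h1
    linarith
  -- the continuous estimate
  set A : ℝ := Real.log 2 + Real.log S with hA_def
  have hg : ∀ v : ℝ, 0 ≤ v → 2*v - A ≤ f (v + δ) - f v := by
    intro v hv
    set n : ℕ := ⌊Real.exp (2*v)⌋₊ with hn_def
    have hexp1 : (1:ℝ) ≤ Real.exp (2*v) := Real.one_le_exp (by linarith)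
    have hn1 : 1 ≤ n := Nat.le_floor (by exact_mod_cast hexp1)
    have hnR : (1:ℝ) ≤ (n:ℝ) := by exact_mod_cast hn1
    have hfloor_le : (n:ℝ) ≤ Real.exp (2*v) := Nat.floor_le (Real.exp_pos _).le
    have hlt : Real.exp (2*v) < (n:ℝ) + 1 := Nat.lt_floor_add_one _
    have h2n : Real.exp (2*v) ≤ 2 * (n:ℝ) := by linarith
    have hlogn_le : Real.log (n:ℝ) ≤ 2*v := by
      calc Real.log (n:ℝ) ≤ Real.log (Real.exp (2*v)) :=
            Real.log_le_log (by linarith) hfloor_le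
        _ = 2*v := Real.log_exp _
    have hlogn_ge : 2*v ≤ Real.log 2 + Real.log (n:ℝ) := by
      have := Real.log_le_log (Real.exp_pos _) h2n
      rw [Real.log_exp, Real.log_mul (by norm_num) (by linarith)] at this
      exact this
    -- use hkey with k = n - 1
    obtain ⟨k, hk⟩ : ∃ k : ℕ, n = k + 1 := ⟨n - 1, by omega⟩
    have hcast : ((k:ℝ)+1) = (n:ℝ) := by rw [hk]; push_cast; ring
    have h1 := hkey k
    rw [hcast] at h1
    have hw : Real.log (n:ℝ) / 2 ≤ v := by linarith
    have h2 := gmono _ _ hw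
    linarith
  -- choose H
  refine ⟨(m:ℝ) + |A| + 2, by linarith [abs_nonneg A], ?_⟩
  intro t ht
  have hH0 : (0:ℝ) < (m:ℝ) + |A| + 2 := by linarith [abs_nonneg A]
  by_cases ht1 : t ≤ 1
  · rw [h01 t ht ht1]
    have h1 : 0 ≤ M (((m:ℝ) + |A| + 2) * t) := hnonneg _ (mul_pos hH0 ht)
    have h2 : Real.log t ≤ 0 := Real.log_nonpos ht.le ht1
    linarith [abs_nonneg A]
  · push_neg at ht1
    set u : ℝ := Real.log t with hu_def
    have hu0 : 0 < u := Real.log_pos ht1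
    have hMt : M t = f u := by
      show M t = M (Real.exp (Real.log t))
      rw [Real.exp_log ht]
    have hHt : ((m:ℝ) + |A| + 2) * t = Real.exp (u + Real.log ((m:ℝ) + |A| + 2)) := by
      rw [Real.exp_add, Real.exp_log ht, Real.exp_log hH0]
      ring
    have hMHt : M (((m:ℝ) + |A| + 2) * t) = f (u + Real.log ((m:ℝ) + |A| + 2)) := by
      rw [hHt]
    have hδleH : δ ≤ Real.log ((m:ℝ) + |A| + 2) := by
      rw [hδ]
      exact Real.log_le_log (by linarith) (by linarith [abs_nonneg A])
    have h1 : f (u + δ) ≤ f (u + Real.log ((m:ℝ) + |A| + 2)) :=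
      fmono _ _ (by linarith)
    have h2 := hg u hu0.le
    have hAle : A ≤ (m:ℝ) + |A| + 2 := by
      have := le_abs_self A
      linarith
    rw [hMt, hMHt]
    linarith
end

section
/- Let M : (0,∞) → [0,∞) be nondecreasing with M(t) = 0 for 0 < t ≤ 1, and such that t ↦ M(e^t) is convex on ℝ. Then the following are equivalent: (i) there exists H > 1 such that M(t) + log t ≤ M(Ht) + H for all t > 0; (ii) for every integer j ≥ 1 there exists an integer m ≥ j such that ∑_{k=1}^∞ exp( M(j·k^{1/2}) − M(m·k^{1/2}) ) < ∞. -/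
/-!
(i) ⇒ (ii): iterating (i) four times gives `M t + 4 log t ≤ M (H⁴ t) + 4 H`, so for `m ≥ H⁴ j`
the `k`-th term is `O(k⁻²)`.

(ii) ⇒ (i): convexity of `M ∘ exp` makes `s ↦ M (m s) - M s` nondecreasing, so the series for
`j = 1` has antitone terms; being summable, they are eventually `≤ 1 / k`, i.e.
`M (√k) + log k ≤ M (m √k)` for large `k`. Comparing `t` with the nearest `√k` above it yields
`M t + log t ≤ M (2 m t)` for large `t`, and small `t` are absorbed into the constant `H`.
-/

open Real Set Filter

theorem ConvexOn.sub_le_sub_of_le {𝕜 : Type*} [Field 𝕜] [LinearOrder 𝕜] [IsStrictOrderedRing 𝕜]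
    {g : 𝕜 → 𝕜} (hg : ConvexOn 𝕜 univ g) {u v a : 𝕜} (huv : u ≤ v) (ha : 0 ≤ a) :
    g (u + a) - g u ≤ g (v + a) - g v := by
  rcases ha.eq_or_lt with rfl | ha
  · simp
  rcases huv.eq_or_lt with rfl | huv
  · rfl
  have h₁ : slope g u (u + a) ≤ slope g u (v + a) :=
    hg.slope_mono (mem_univ u) ⟨mem_univ _, (by linarith : u < u + a).ne'⟩
      ⟨mem_univ _, (by linarith : u < v + a).ne'⟩ (by linarith)
  have h₂ : slope g (v + a) u ≤ slope g (v + a) v :=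
    hg.slope_mono (mem_univ _) ⟨mem_univ _, (by linarith : u < v + a).ne⟩
      ⟨mem_univ _, (by linarith : v < v + a).ne⟩ huv.le
  have h := h₁.trans (slope_comm g u (v + a) ▸ h₂)
  rw [slope_comm g (v + a) v, slope_def_field, slope_def_field] at h
  simpa [add_sub_cancel_left, div_le_div_iff_of_pos_right ha] using h

theorem Summable.eventually_succ_mul_le_one_of_antitone {a : ℕ → ℝ} (ha : Antitone a)
    (h0 : ∀ k, 0 ≤ a k) (hs : Summable a) : ∀ᶠ k : ℕ in atTop, ((k : ℝ) + 1) * a k ≤ 1 := by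
  obtain ⟨N, hN⟩ := ((tendsto_sum_nat_add a).eventually_lt_const one_half_pos).exists
  filter_upwards [eventually_ge_atTop (2 * N)] with k hk
  have hblock : ((k - N + 1 : ℕ) : ℝ) * a k ≤ ∑ j ∈ Finset.range (k - N + 1), a (j + N) := by
    simpa using Finset.card_nsmul_le_sum (Finset.range (k - N + 1)) (fun j => a (j + N)) (a k)
      fun j hj => ha (by rw [Finset.mem_range] at hj; omega)
  have htail := (summable_nat_add_iff N).2 hs |>.sum_le_tsum (Finset.range (k - N + 1))
    (fun j _ => h0 _)
  have hcard : (k : ℝ) + 1 ≤ 2 * ((k - N + 1 : ℕ) : ℝ) := by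
    have : k + 1 ≤ 2 * (k - N + 1) := by omega
    exact_mod_cast this
  nlinarith [h0 k]

section

variable {M : ℝ → ℝ}

theorem monotoneOn_mul_sub_of_convexOn_exp (hconv : ConvexOn ℝ univ fun u => M (exp u))
    {c : ℝ} (hc : 1 ≤ c) : MonotoneOn (fun s => M (c * s) - M s) (Ioi 0) := by
  intro s hs t ht hst
  have h := hconv.sub_le_sub_of_le (log_le_log hs hst) (log_nonneg hc)
  simp only [exp_add, exp_log hs, exp_log ht, exp_log (zero_lt_one.trans_le hc)] at h
  simpa only [mul_comm c] using h

theorem eventually_add_log_le_of_summable (hconv : ConvexOn ℝ univ fun u => M (exp u))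
    {m : ℝ} (hm : 1 ≤ m) (hs : Summable fun k : ℕ => exp (M √(k + 1) - M (m * √(k + 1)))) :
    ∀ᶠ k : ℕ in atTop, M √(k + 1) + log (k + 1) ≤ M (m * √(k + 1)) := by
  have hanti : Antitone fun k : ℕ => exp (M √(k + 1) - M (m * √(k + 1))) := by
    intro k k' hkk'
    have := monotoneOn_mul_sub_of_convexOn_exp hconv hm (by positivity : (0 : ℝ) < √(k + 1))
      (by positivity : (0 : ℝ) < √(k' + 1)) (sqrt_le_sqrt (by gcongr))
    exact exp_le_exp.2 (by linarith)
  filter_upwards [hs.eventually_succ_mul_le_one_of_antitone hanti fun _ => (exp_pos _).le]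
    with k hk
  rw [exp_sub, mul_div_assoc', div_le_one (exp_pos _)] at hk
  rw [← exp_le_exp, exp_add, exp_log (by positivity)]
  linarith

theorem add_log_le_of_forall_nat_ge (hM : MonotoneOn M (Ioi 0)) {m : ℝ} (hm : 0 < m) {N : ℕ}
    (hN : ∀ k ≥ N, M √(k + 1) + log (k + 1) ≤ M (m * √(k + 1))) {t : ℝ} (ht : N + 1 ≤ t) :
    M t + log t ≤ M (2 * m * t) := by
  set k := ⌊t ^ 2⌋₊
  have ht1 : 1 ≤ t := by linarith [(N.cast_nonneg : (0 : ℝ) ≤ N)]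
  have hkN : N ≤ k := Nat.le_floor (by nlinarith)
  have hk_lt : t ^ 2 < k + 1 := Nat.lt_floor_add_one _
  have hk_le : (k : ℝ) ≤ t ^ 2 := Nat.floor_le (by positivity)
  have hts : t ≤ √(k + 1) := le_sqrt_of_sq_le hk_lt.le
  have hst : √(k + 1) ≤ 2 * t := sqrt_le_iff.2 ⟨by linarith, by nlinarith⟩
  have hlog : log t ≤ log (k + 1) := log_le_log (by linarith) (by nlinarith)
  calc M t + log t ≤ M √(k + 1) + log (k + 1) :=
        add_le_add (hM (mem_Ioi.2 (by linarith)) (mem_Ioi.2 (by linarith)) hts) hlog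
    _ ≤ M (m * √(k + 1)) := hN k hkN
    _ ≤ M (2 * m * t) := hM (mem_Ioi.2 (by positivity)) (mem_Ioi.2 (by positivity)) (by nlinarith)

theorem exists_add_log_le_of_forall_ge (hM : MonotoneOn M (Ioi 0)) {c T : ℝ} (hc : 1 ≤ c)
    (h : ∀ t ≥ T, M t + log t ≤ M (c * t)) :
    ∃ H, 1 < H ∧ ∀ t, 0 < t → M t + log t ≤ M (H * t) + H := by
  refine ⟨c + |log T| + 1, by linarith [abs_nonneg (log T)], fun t ht => ?_⟩
  have hH : M t ≤ M ((c + |log T| + 1) * t) :=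
    hM ht (mem_Ioi.2 (by positivity)) (by nlinarith [abs_nonneg (log T)])
  rcases le_or_gt T t with hTt | htT
  · calc M t + log t ≤ M (c * t) := h t hTt
      _ ≤ M ((c + |log T| + 1) * t) :=
        hM (mem_Ioi.2 (by positivity)) (mem_Ioi.2 (by positivity)) (by nlinarith [abs_nonneg (log T)])
      _ ≤ _ := by linarith [abs_nonneg (log T)]
  · linarith [log_le_log ht htT.le, le_abs_self (log T)]

theorem add_mul_log_le_of_shift {H : ℝ} (hH : 1 ≤ H)
    (hi : ∀ t, 0 < t → M t + log t ≤ M (H * t) + H) (n : ℕ) {t : ℝ} (ht : 0 < t) :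
    M t + n * log t ≤ M (H ^ n * t) + n * H := by
  induction n with
  | zero => simp
  | succ n ih =>
    have hlog : log t ≤ log (H ^ n * t) :=
      log_le_log ht (le_mul_of_one_le_left ht.le (one_le_pow₀ hH))
    have := hi (H ^ n * t) (by positivity)
    rw [pow_succ', mul_assoc]
    push_cast
    linarith

theorem summable_exp_sub_of_shift (hM : MonotoneOn M (Ioi 0)) {H : ℝ} (hH : 1 ≤ H)
    (hi : ∀ t, 0 < t → M t + log t ≤ M (H * t) + H) {j m : ℝ} (hj : 1 ≤ j)
    (hm : H ^ 4 * j ≤ m) :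
    Summable fun k : ℕ => exp (M (j * √(k + 1)) - M (m * √(k + 1))) := by
  have hsum : Summable fun k : ℕ => exp (4 * H) * (((k : ℝ) + 1) ^ 2)⁻¹ :=
    ((summable_nat_add_iff 1).2 (Real.summable_nat_pow_inv.2 one_lt_two)).mul_left _ |>.congr
      fun k => by push_cast; rfl
  refine hsum.of_nonneg_of_le (fun _ => (exp_pos _).le) fun k => ?_
  have hk : (0 : ℝ) < k + 1 := by positivity
  set s := √((k : ℝ) + 1)
  have hs : 0 < s := sqrt_pos.2 hk
  have hshift := add_mul_log_le_of_shift hH hi 4 (mul_pos (by linarith) hs : 0 < j * s)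
  have hm0 : 0 < m := by nlinarith [one_le_pow₀ (n := 4) hH]
  have hmono : M (H ^ 4 * (j * s)) ≤ M (m * s) :=
    hM (mem_Ioi.2 (by positivity)) (mem_Ioi.2 (by positivity)) (by rw [← mul_assoc]; gcongr)
  have hlog : log (k + 1) ≤ 2 * log (j * s) := by
    have : log s = log (k + 1) / 2 := log_sqrt hk.le
    linarith [log_le_log hs (le_mul_of_one_le_left hs.le hj)]
  calc exp (M (j * s) - M (m * s)) ≤ exp (4 * H - 2 * log (k + 1)) := by
        refine exp_le_exp.2 ?_
        push_cast at hshift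
        linarith
    _ = exp (4 * H) * (((k : ℝ) + 1) ^ 2)⁻¹ := by
        rw [exp_sub, ← exp_log (by positivity : (0 : ℝ) < ((k : ℝ) + 1) ^ 2), log_pow,
          div_eq_mul_inv]
        norm_num

end

theorem nuclearity_characterization_general (M : ℝ → ℝ)
    (hmono : ∀ s t : ℝ, 0 < s → s ≤ t → M s ≤ M t)
    (hconv : ConvexOn ℝ Set.univ (fun u : ℝ => M (Real.exp u))) :
    (∃ H : ℝ, 1 < H ∧ ∀ t : ℝ, 0 < t → M t + Real.log t ≤ M (H * t) + H) ↔
      (∀ j : ℕ, 1 ≤ j → ∃ m : ℕ, j ≤ m ∧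
        Summable (fun k : ℕ =>
          Real.exp (M ((j : ℝ) * Real.sqrt (k + 1)) - M ((m : ℝ) * Real.sqrt (k + 1))))) := by
  have hM : MonotoneOn M (Ioi 0) := fun s hs t _ hst => hmono s t hs hst
  constructor
  · rintro ⟨H, hH, hi⟩ j hj
    refine ⟨j * ⌈H ^ 4⌉₊, Nat.le_mul_of_pos_right j (Nat.ceil_pos.2 (by positivity)), ?_⟩
    refine summable_exp_sub_of_shift hM hH.le hi (by exact_mod_cast hj) ?_
    push_cast
    nlinarith [Nat.le_ceil (H ^ 4), (Nat.cast_nonneg j : (0 : ℝ) ≤ j)]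
  · intro hii
    obtain ⟨m, hm, hs⟩ := hii 1 le_rfl
    have hm' : (1 : ℝ) ≤ m := by exact_mod_cast hm
    obtain ⟨N, hN⟩ := (eventually_add_log_le_of_summable hconv hm'
      (by simpa only [Nat.cast_one, one_mul] using hs)).exists_forall_of_atTop
    exact exists_add_log_le_of_forall_ge hM (by linarith : (1 : ℝ) ≤ 2 * m)
      fun t ht => add_log_le_of_forall_nat_ge hM (by linarith) hN ht

/-- Let `M : (0,∞) → [0,∞)` be nondecreasing, vanishing on `(0,1]`, with
`t ↦ M (e^t)` convex on `ℝ`. Then the following are equivalent: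
(i) there exists `H > 1` such that `M t + log t ≤ M (H·t) + H` for all `t > 0`;
(ii) for every integer `j ≥ 1` there exists an integer `m ≥ j` such that
`∑_{k=1}^∞ exp (M (j·√k) − M (m·√k)) < ∞`. -/
theorem nuclearity_characterization (M : ℝ → ℝ)
    (hnonneg : ∀ t : ℝ, 0 < t → 0 ≤ M t)
    (hmono : ∀ s t : ℝ, 0 < s → s ≤ t → M s ≤ M t)
    (h01 : ∀ t : ℝ, 0 < t → t ≤ 1 → M t = 0)
    (hconv : ConvexOn ℝ Set.univ (fun u : ℝ => M (Real.exp u))) :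
    (∃ H : ℝ, 1 < H ∧ ∀ t : ℝ, 0 < t → M t + Real.log t ≤ M (H * t) + H) ↔
      (∀ j : ℕ, 1 ≤ j → ∃ m : ℕ, j ≤ m ∧
        Summable (fun k : ℕ =>
          Real.exp (M ((j : ℝ) * Real.sqrt (k + 1)) - M ((m : ℝ) * Real.sqrt (k + 1))))) :=
  nuclearity_characterization_general M hmono hconv
end

section
/- Let ω : [0,∞) → [0,∞) be continuous and nondecreasing with ω(t) = 0 for 0 ≤ t ≤ 1 and such that φ(t) := ω(e^t) is convex on [0,∞). Define φ*(s) = sup_{t ≥ 0} (ts − φ(t)) and M(t) = sup_{p ∈ ℕ₀} ( p·log t − φ*(p) ). Then ω(t) ≤ log t + M(t) for all t ≥ 1, and ω(t) ≤ 2·M(t) + φ*(1) for all t > 0. -/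
set_option maxHeartbeats 800000


/-- Let `ω : [0,∞) → [0,∞)` be continuous, nondecreasing, vanishing on `[0,1]`,
with `φ(t) = ω (e^t)` convex on `[0,∞)`. With `φ*(s) = sup_{t ≥ 0} (t·s − φ t)` and
`M t = sup_{p ∈ ℕ₀} (p · log t − φ*(p))`, one has `ω t ≤ log t + M t` for all `t ≥ 1`, and
`ω t ≤ 2·M t + φ*(1)` for all `t > 0`. -/
theorem weight_le_assoc_fun (ω φstar M : ℝ → ℝ)
    (hcont : ContinuousOn ω (Set.Ici (0 : ℝ)))
    (hmono : ∀ s t : ℝ, 0 ≤ s → s ≤ t → ω s ≤ ω t)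
    (hnonneg : ∀ t : ℝ, 0 ≤ t → 0 ≤ ω t)
    (h01 : ∀ t : ℝ, 0 ≤ t → t ≤ 1 → ω t = 0)
    (hconv : ConvexOn ℝ (Set.Ici (0 : ℝ)) (fun t : ℝ => ω (Real.exp t)))
    (hφstar : ∀ s : ℝ, 0 ≤ s →
      IsLUB {x : ℝ | ∃ t : ℝ, 0 ≤ t ∧ x = t * s - ω (Real.exp t)} (φstar s))
    (hM : ∀ t : ℝ, 0 < t →
      IsLUB {x : ℝ | ∃ p : ℕ, x = (p : ℝ) * Real.log t - φstar p} (M t)) :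
    (∀ t : ℝ, 1 ≤ t → ω t ≤ Real.log t + M t) ∧
      (∀ t : ℝ, 0 < t → ω t ≤ 2 * M t + φstar 1) := by
  set φ : ℝ → ℝ := fun u => ω (Real.exp u) with hφdef
  have hφmono : ∀ u v : ℝ, u ≤ v → φ u ≤ φ v := fun u v huv =>
    hmono _ _ (Real.exp_pos u).le (Real.exp_le_exp.2 huv)
  have hφ0 : φ 0 = 0 := by simpa [φ] using h01 1 zero_le_one le_rfl
  -- main inequality
  have key : ∀ t : ℝ, 1 ≤ t → ω t ≤ Real.log t + M t := by
    intro t ht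
    have ht0 : (0 : ℝ) < t := lt_of_lt_of_le one_pos ht
    set x := Real.log t with hxdef
    have hx0 : 0 ≤ x := Real.log_nonneg ht
    have hωt : ω t = φ x := by simp [φ, hxdef, Real.exp_log ht0]
    set C := φ (x + 1) - φ x with hCdef
    have hC0 : 0 ≤ C := sub_nonneg.2 (hφmono x (x + 1) (by linarith))
    rw [hωt]
    refine le_of_forall_pos_le_add ?_
    intro ε hε
    set δ : ℝ := min 1 (ε / (C + 1)) with hδdef
    have hδ0 : 0 < δ := lt_min one_pos (div_pos hε (by linarith))
    have hδ1 : δ ≤ 1 := min_le_left _ _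
    set s₀ : ℝ := (φ (x + δ) - φ x) / δ with hs₀def
    have hs0 : 0 ≤ s₀ := div_nonneg (sub_nonneg.2 (hφmono x (x + δ) (by linarith))) hδ0.le
    -- s₀ ≤ C
    have hsC : s₀ ≤ C := by
      have h := hconv.secant_mono (a := x) (x := x + δ) (y := x + 1)
        (Set.mem_Ici.2 hx0) (Set.mem_Ici.2 (by linarith)) (Set.mem_Ici.2 (by linarith))
        (by intro h; nlinarith [hδ0]) (by intro h; nlinarith) (by linarith)
      have : (φ (x + δ) - φ x) / δ ≤ (φ (x + 1) - φ x) / 1 := by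
        simpa using h
      simpa [hCdef] using this
    -- approximate subgradient inequality
    have hsub : ∀ u : ℝ, 0 ≤ u → φ x + s₀ * (u - x) - s₀ * δ ≤ φ u := by
      intro u hu
      rcases le_or_gt u x with hux | hux
      · rcases eq_or_lt_of_le hux with rfl | hux
        · nlinarith [mul_nonneg hs0 hδ0.le]
        · have h := hconv.secant_mono (a := x) (x := u) (y := x + δ)
            (Set.mem_Ici.2 hx0) (Set.mem_Ici.2 hu) (Set.mem_Ici.2 (by linarith))
            (by intro h; linarith) (by intro h; nlinarith) (by linarith)
          have h' : (φ u - φ x) / (u - x) ≤ s₀ := by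
            have : (x + δ) - x = δ := by ring
            simpa [hs₀def, this] using h
          have hlt : u - x < 0 := by linarith
          have := (div_le_iff_of_neg hlt).1 h'
          nlinarith [mul_nonneg hs0 hδ0.le]
      · rcases le_or_gt u (x + δ) with huδ | huδ
        · have h1 : φ x ≤ φ u := hφmono _ _ hux.le
          nlinarith [mul_nonneg hs0 (by linarith : (0:ℝ) ≤ δ - (u - x))]
        · have h := hconv.secant_mono (a := x) (x := x + δ) (y := u)
            (Set.mem_Ici.2 hx0) (Set.mem_Ici.2 (by linarith)) (Set.mem_Ici.2 hu)
            (by intro h; nlinarith) (by intro h; linarith) (by linarith)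
          have h' : s₀ ≤ (φ u - φ x) / (u - x) := by
            have : (x + δ) - x = δ := by ring
            simpa [hs₀def, this] using h
          have hlt : 0 < u - x := by linarith
          have := (le_div_iff₀ hlt).1 h'
          nlinarith [mul_nonneg hs0 hδ0.le]
    -- φ*(s₀) ≤ s₀ x - φ x + s₀ δ
    have h1 : φstar s₀ ≤ s₀ * x - φ x + s₀ * δ := by
      refine (hφstar s₀ hs0).2 ?_
      rintro y ⟨u, hu, rfl⟩
      have := hsub u hu
      nlinarith
    set p : ℕ := ⌊s₀⌋₊ with hpdef
    have hp1 : (p : ℝ) ≤ s₀ := Nat.floor_le hs0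
    have hp2 : s₀ < (p : ℝ) + 1 := Nat.lt_floor_add_one s₀
    -- φ*(p) ≤ φ*(s₀)
    have h2 : φstar p ≤ φstar s₀ := by
      refine (hφstar p (by positivity)).2 ?_
      rintro y ⟨u, hu, rfl⟩
      have hmem : u * s₀ - φ u ∈ {x : ℝ | ∃ t : ℝ, 0 ≤ t ∧ x = t * s₀ - ω (Real.exp t)} :=
        ⟨u, hu, rfl⟩
      have hle := (hφstar s₀ hs0).1 hmem
      nlinarith [mul_le_mul_of_nonneg_left hp1 hu]
    -- M t ≥ p x - φ* p
    have h3 : (p : ℝ) * x - φstar p ≤ M t := (hM t ht0).1 ⟨p, by rw [hxdef]⟩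
    have hδε : C * δ ≤ ε := by
      have h4 : δ ≤ ε / (C + 1) := min_le_right _ _
      have h5 : C * (ε / (C + 1)) ≤ ε := by
        rw [mul_div_assoc', div_le_iff₀ (by linarith : (0:ℝ) < C + 1)]
        nlinarith
      exact le_trans (mul_le_mul_of_nonneg_left h4 hC0) h5
    -- combine
    have hsx : s₀ * x ≤ ((p : ℝ) + 1) * x := mul_le_mul_of_nonneg_right hp2.le hx0
    have hsδ : s₀ * δ ≤ C * δ := mul_le_mul_of_nonneg_right hsC hδ0.le
    linarith
  refine ⟨key, ?_⟩
  -- auxiliary facts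
  have hφstar0 : φstar 0 = 0 := by
    have hub : (0 : ℝ) ∈ upperBounds {x : ℝ | ∃ t : ℝ, 0 ≤ t ∧ x = t * 0 - ω (Real.exp t)} := by
      rintro y ⟨u, hu, rfl⟩
      have := hnonneg (Real.exp u) (Real.exp_pos u).le
      nlinarith
    have hle := (hφstar 0 le_rfl).2 hub
    have hge : (0:ℝ) * 0 - ω (Real.exp 0) ≤ φstar 0 := (hφstar 0 le_rfl).1 ⟨0, le_rfl, rfl⟩
    have h0 : (0:ℝ) * 0 - ω (Real.exp 0) = 0 := by simpa [φ] using hφ0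
    rw [h0] at hge
    linarith
  have hφstar1 : 0 ≤ φstar 1 := by
    have hge : (0:ℝ) * 1 - ω (Real.exp 0) ≤ φstar 1 := (hφstar 1 zero_le_one).1 ⟨0, le_rfl, rfl⟩
    have h0 : (0:ℝ) * 1 - ω (Real.exp 0) = 0 := by simpa [φ] using hφ0
    rw [h0] at hge
    linarith
  intro t ht0
  have hM0 : 0 ≤ M t := by
    have h := (hM t ht0).1 (show ((0:ℕ):ℝ) * Real.log t - φstar ((0:ℕ):ℝ) ∈ _ from ⟨0, rfl⟩)
    simpa [hφstar0] using h
  have hMlog : Real.log t - φstar 1 ≤ M t := by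
    have h := (hM t ht0).1 (show ((1:ℕ):ℝ) * Real.log t - φstar ((1:ℕ):ℝ) ∈ _ from ⟨1, rfl⟩)
    simpa using h
  rcases le_or_gt t 1 with ht1 | ht1
  · rw [h01 t ht0.le ht1]
    linarith
  · have := key t ht1.le
    linarith
end

section
/- Let ω : [0,∞) → [0,∞) be continuous, nondecreasing, with ω(t) = 0 for 0 ≤ t ≤ 1, ω(t)/t → 0 as t → ∞, and φ(t) := ω(e^t) convex. Let φ*(s) = sup_{t ≥ 0}(ts − φ(t)) (so φ*(0) = 0 and φ* is convex, hence φ*(s) + φ*(p) ≤ φ*(s+p)). Then for every ε > 0 there exists a constant R > 0 such that s^{s/2} · e^{φ*(p)} ≤ R · (ε e)^s · e^{φ*(p+s)} for all real s > 0 and all p ∈ ℕ₀. -/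
/-!
`φ*` is a supremum of affine functions of `s`, hence convex, and `φ*(0) ≤ 0` because `ω ≥ 0`;
a convex function on `[0, ∞)` that is nonpositive at `0` is superadditive, so
`φ*(p) + φ*(s) ≤ φ*(p + s)`. It therefore suffices to bound `s^{s/2}` by `R (εe)^s e^{φ*(s)}`.
Since `ω(u) ≤ u` for large `u`, testing the supremum at `t = log s` gives `φ*(s) ≥ s log s - s`,
which dominates `(s/2) log s - s log (εe)` for large `s`; on a bounded range of `s` the
difference is bounded because `φ*(s) ≥ -ω(1)`.
-/

open Filter Real Set

theorem ConvexOn.map_le_div_mul_of_map_zero_nonpos {f : ℝ → ℝ} (hf : ConvexOn ℝ (Ici 0) f)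
    (hf0 : f 0 ≤ 0) {x y : ℝ} (hx : 0 ≤ x) (hxy : x ≤ y) (hy : 0 < y) :
    f x ≤ x / y * f y := by
  have hyx : 0 ≤ (y - x) / y := div_nonneg (sub_nonneg.2 hxy) hy.le
  have h := hf.2 (mem_Ici.2 hy.le) (mem_Ici.2 le_rfl) (div_nonneg hx hy.le) hyx
    (by field_simp; ring)
  rw [smul_eq_mul, smul_eq_mul, smul_eq_mul, smul_eq_mul, mul_zero, add_zero,
    div_mul_cancel₀ x hy.ne'] at h
  nlinarith

theorem ConvexOn.add_le_map_add_of_map_zero_nonpos {f : ℝ → ℝ} (hf : ConvexOn ℝ (Ici 0) f)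
    (hf0 : f 0 ≤ 0) {a b : ℝ} (ha : 0 ≤ a) (hb : 0 ≤ b) : f a + f b ≤ f (a + b) := by
  rcases (add_nonneg ha hb).eq_or_lt with hab | hab
  · obtain ⟨rfl, rfl⟩ : a = 0 ∧ b = 0 := ⟨by linarith, by linarith⟩
    simpa using hf0
  have hfa := hf.map_le_div_mul_of_map_zero_nonpos hf0 ha (le_add_of_nonneg_right hb) hab
  have hfb := hf.map_le_div_mul_of_map_zero_nonpos hf0 hb (le_add_of_nonneg_left ha) hab
  calc f a + f b ≤ (a / (a + b) + b / (a + b)) * f (a + b) := by linarith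
    _ = f (a + b) := by rw [← add_div, div_self hab.ne', one_mul]

def IsLegendreConjugate (φ f : ℝ → ℝ) : Prop :=
  ∀ s, 0 ≤ s → IsLUB {x | ∃ t, 0 ≤ t ∧ x = t * s - φ t} (f s)

namespace IsLegendreConjugate

variable {φ f : ℝ → ℝ}

theorem sub_le (hf : IsLegendreConjugate φ f) {s t : ℝ} (hs : 0 ≤ s) (ht : 0 ≤ t) :
    t * s - φ t ≤ f s :=
  (hf s hs).1 ⟨t, ht, rfl⟩

theorem convexOn (hf : IsLegendreConjugate φ f) : ConvexOn ℝ (Ici 0) f := by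
  refine ⟨convex_Ici 0, fun a ha b hb μ ν hμ hν hμν => ?_⟩
  refine (hf _ (by simp only [mem_Ici] at *; positivity)).2 ?_
  rintro _ ⟨t, ht, rfl⟩
  have hta := hf.sub_le ha ht
  have htb := hf.sub_le hb ht
  simp only [smul_eq_mul]
  linear_combination μ * hta + ν * htb + φ t * hμν

theorem map_zero_nonpos (hf : IsLegendreConjugate φ f) (hφ : ∀ t, 0 ≤ t → 0 ≤ φ t) : f 0 ≤ 0 :=
  (hf 0 le_rfl).2 fun _ ⟨t, ht, hx⟩ => by simpa [hx] using hφ t ht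

theorem eventually_mul_log_sub_le (hf : IsLegendreConjugate φ f)
    (hφ : ∀ᶠ t in atTop, φ t ≤ exp t) :
    ∀ᶠ s in atTop, s * log s - s ≤ f s := by
  filter_upwards [tendsto_log_atTop.eventually hφ, eventually_ge_atTop 1] with s hφs hs
  have := hf.sub_le (zero_le_one.trans hs) (log_nonneg hs)
  rw [exp_log (zero_lt_one.trans_le hs)] at hφs
  linarith

theorem exists_half_mul_log_le (hf : IsLegendreConjugate φ f)
    (hφ : ∀ᶠ t in atTop, φ t ≤ exp t) (c : ℝ) :
    ∃ C, ∀ s, 0 < s → s * log s / 2 ≤ C + c * s + f s := by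
  have hlarge : ∀ᶠ s in atTop, s * log s / 2 ≤ c * s + f s := by
    filter_upwards [hf.eventually_mul_log_sub_le hφ,
      tendsto_log_atTop.eventually_ge_atTop (2 * (1 - c)), eventually_gt_atTop 0]
      with s hfs hlog hs
    nlinarith
  obtain ⟨S, hS⟩ := hlarge.exists_forall_of_atTop
  refine ⟨S ^ 2 + |c| * |S| + |φ 0|, fun s hs => ?_⟩
  have hfs : -|φ 0| ≤ f s := by
    have := hf.sub_le hs.le le_rfl
    rw [zero_mul, zero_sub] at this
    linarith [le_abs_self (φ 0)]
  rcases le_or_gt S s with hSs | hsS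
  · nlinarith [hS s hSs, sq_nonneg S, abs_nonneg c, abs_nonneg S, abs_nonneg (φ 0)]
  · have hlog : s * log s ≤ s * (s - 1) :=
      mul_le_mul_of_nonneg_left (log_le_sub_one_of_pos hs) hs.le
    have hcs : -(|c| * |S|) ≤ c * s := by
      nlinarith [neg_abs_le c, abs_nonneg c, le_abs_self S]
    nlinarith

end IsLegendreConjugate

theorem langenbruch_condition_general (ω φstar : ℝ → ℝ)
    (hnonneg : ∀ t : ℝ, 0 ≤ t → 0 ≤ ω t)
    (hsmall : Filter.Tendsto (fun t : ℝ => ω t / t) Filter.atTop (nhds 0))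
    (hφstar : ∀ s : ℝ, 0 ≤ s →
      IsLUB {x : ℝ | ∃ t : ℝ, 0 ≤ t ∧ x = t * s - ω (Real.exp t)} (φstar s)) :
    ∀ ε : ℝ, 0 < ε → ∃ R : ℝ, 0 < R ∧ ∀ s : ℝ, 0 < s → ∀ p : ℕ,
      s ^ (s / 2) * Real.exp (φstar p)
        ≤ R * (ε * Real.exp 1) ^ s * Real.exp (φstar ((p : ℝ) + s)) := by
  intro ε hε
  have hconj : IsLegendreConjugate (fun t => ω (exp t)) φstar := hφstar
  have hω : ∀ᶠ u in atTop, ω u ≤ u := by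
    filter_upwards [hsmall.eventually (gt_mem_nhds one_pos), eventually_gt_atTop 0]
      with u hu hu0
    exact ((div_lt_one hu0).1 hu).le
  obtain ⟨C, hC⟩ :=
    hconj.exists_half_mul_log_le (tendsto_exp_atTop.eventually hω) (log (ε * exp 1))
  refine ⟨exp C, exp_pos C, fun s hs p => ?_⟩
  have hsuper : φstar p + φstar s ≤ φstar (p + s) :=
    hconj.convexOn.add_le_map_add_of_map_zero_nonpos
      (hconj.map_zero_nonpos fun t _ => hnonneg _ (exp_pos t).le) p.cast_nonneg hs.le
  rw [rpow_def_of_pos hs, rpow_def_of_pos (by positivity), ← exp_add, ← exp_add, ← exp_add]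
  exact exp_le_exp.2 (by linarith [hC s hs])

/-- Let `ω : [0,∞) → [0,∞)` be continuous, nondecreasing, vanishing on
`[0,1]`, with `ω t / t → 0` as `t → ∞` and `φ(t) = ω (e^t)` convex on `[0,∞)`, and let
`φ*(s) = sup_{t ≥ 0} (t·s − φ t)` (finite on `[0,∞)`). Then for every `ε > 0` there is
`R > 0` such that `s^{s/2} · e^{φ*(p)} ≤ R · (ε·e)^s · e^{φ*(p+s)}` for all real `s > 0`
and all `p ∈ ℕ₀`. -/
theorem langenbruch_condition (ω φstar : ℝ → ℝ)
    (hcont : ContinuousOn ω (Set.Ici (0 : ℝ)))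
    (hmono : ∀ s t : ℝ, 0 ≤ s → s ≤ t → ω s ≤ ω t)
    (hnonneg : ∀ t : ℝ, 0 ≤ t → 0 ≤ ω t)
    (h01 : ∀ t : ℝ, 0 ≤ t → t ≤ 1 → ω t = 0)
    (hsmall : Filter.Tendsto (fun t : ℝ => ω t / t) Filter.atTop (nhds 0))
    (hconv : ConvexOn ℝ (Set.Ici (0 : ℝ)) (fun t : ℝ => ω (Real.exp t)))
    (hφstar : ∀ s : ℝ, 0 ≤ s →
      IsLUB {x : ℝ | ∃ t : ℝ, 0 ≤ t ∧ x = t * s - ω (Real.exp t)} (φstar s)) :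
    ∀ ε : ℝ, 0 < ε → ∃ R : ℝ, 0 < R ∧ ∀ s : ℝ, 0 < s → ∀ p : ℕ,
      s ^ (s / 2) * Real.exp (φstar p)
        ≤ R * (ε * Real.exp 1) ^ s * Real.exp (φstar ((p : ℝ) + s)) :=
  langenbruch_condition_general ω φstar hnonneg hsmall hφstar
end

section
/- Define ω : [0,∞) → [0,∞) by ω(t) = 0 for 0 ≤ t ≤ 1 and ω(t) = (log t)² for t > 1. Then ω does not satisfy condition (BMM): for every H > 1 there exists t ≥ 0 with 2·ω(t) > ω(Ht) + H. -/
/-- The weight `ω t = (log t)²` for `t > 1`, extended by `0` on `[0,1]`. -/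
noncomputable def logSqWeight (t : ℝ) : ℝ := if t ≤ 1 then 0 else (Real.log t) ^ 2

/-- The weight `ω t = (log t)²` (for `t > 1`, and `0` on `[0,1]`) does not
satisfy condition (BMM): for every `H > 1` there exists `t ≥ 0` with
`2·ω t > ω (H·t) + H`. -/
theorem logSqWeight_not_BMM :
    ∀ H : ℝ, 1 < H → ∃ t : ℝ, 0 ≤ t ∧ 2 * logSqWeight t > logSqWeight (H * t) + H := by
  intro H hH
  set L := Real.log H with hL
  have hL0 : 0 < L := Real.log_pos hH
  set x : ℝ := 2 * L + H + L ^ 2 + 1 with hx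
  have hx1 : 1 < x := by nlinarith
  refine ⟨Real.exp x, (Real.exp_pos x).le, ?_⟩
  have ht1 : 1 < Real.exp x := by
    calc (1:ℝ) = Real.exp 0 := Real.exp_zero.symm
    _ < Real.exp x := Real.exp_lt_exp.mpr (by linarith)
  have hHt1 : 1 < H * Real.exp x := by nlinarith
  have h1 : logSqWeight (Real.exp x) = x ^ 2 := by
    rw [logSqWeight, if_neg (not_le.mpr ht1), Real.log_exp]
  have h2 : logSqWeight (H * Real.exp x) = (L + x) ^ 2 := by
    rw [logSqWeight, if_neg (not_le.mpr hHt1),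
      Real.log_mul (by positivity) (Real.exp_pos x).ne', Real.log_exp]
  rw [h1, h2]
  nlinarith [sq_nonneg L, sq_nonneg x]
end
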